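/- If the complete d-ary tree of height h can be black pebbled with p pebbles, then there is a deterministic thrifty k-way branching program with O(k^p) states (as k → ∞, with d, h, p fixed) solving the function problem FT_d^h(k), and hence also BT_d^h(k). -/

import Mathlib

/-! ## Fractional black-white pebbling -/

/-- A fractional pebble configuration: black and white pebble values on each node. -/
structure FConfig (V : Type) where
  b : V → ℝ
  w : V → ℝ

namespace FConfig

/-- Validity: all values nonnegative, total value of each node at most 1. -/
def Valid {V : Type} (C : FConfig V) : Prop :=
  ∀ v, 0 ≤ C.b v ∧ 0 ≤ C.w v ∧ C.b v + C.w v ≤ 1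

/-- Total pebble weight of a configuration. -/
noncomputable def weight {V : Type} [Fintype V] (C : FConfig V) : ℝ :=
  ∑ v, (C.b v + C.w v)

/-- The empty configuration. -/
def zero (V : Type) : FConfig V := ⟨fun _ => 0, fun _ => 0⟩

/-- A whole (non-fractional) configuration: all values 0 or 1. -/
def Whole {V : Type} (C : FConfig V) : Prop :=
  ∀ v, (C.b v = 0 ∨ C.b v = 1) ∧ (C.w v = 0 ∨ C.w v = 1)

/-- A black configuration: whole, and with no white pebbles. -/
def BlackOnly {V : Type} (C : FConfig V) : Prop :=
  C.Whole ∧ ∀ v, C.w v = 0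

end FConfig

/-- One legal move of the fractional black-white pebble game (no white sliding):
(i) decrease a black value; (ii) increase a white value; (iii) if every child of `v`
has total pebble value 1, decrease `w v` to 0 and/or increase `b v` arbitrarily while
simultaneously decreasing the black values of the children of `v` arbitrarily.
Here `child c v` means `c` is a child of `v`. -/
def FMove {V : Type} (child : V → V → Prop) (C C' : FConfig V) : Prop :=
  (∃ v, C'.b v ≤ C.b v ∧ C'.w v = C.w v ∧
     ∀ u, u ≠ v → C'.b u = C.b u ∧ C'.w u = C.w u) ∨
  (∃ v, C'.b v = C.b v ∧ C.w v ≤ C'.w v ∧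
     ∀ u, u ≠ v → C'.b u = C.b u ∧ C'.w u = C.w u) ∨
  (∃ v, (∀ c, child c v → C.b c + C.w c = 1) ∧
     C.b v ≤ C'.b v ∧ (C'.w v = 0 ∨ C'.w v = C.w v) ∧
     (∀ c, child c v → C'.b c ≤ C.b c ∧ C'.w c = C.w c) ∧
     (∀ u, u ≠ v → ¬ child u v → C'.b u = C.b u ∧ C'.w u = C.w u))

/-- The additional white sliding move: if `w v = 1`, `j` is a child of `v`, and every
child of `v` other than `j` has total pebble value 1, then set `w v = 0` and increase
`w j` so that `j` gets total pebble value 1. -/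
def WhiteSlide {V : Type} (child : V → V → Prop) (C C' : FConfig V) : Prop :=
  ∃ v j, child j v ∧ j ≠ v ∧ C.w v = 1 ∧
    (∀ c, child c v → c ≠ j → C.b c + C.w c = 1) ∧
    C'.w v = 0 ∧ C'.b v = C.b v ∧
    C'.b j = C.b j ∧ C.w j ≤ C'.w j ∧ C'.b j + C'.w j = 1 ∧
    (∀ u, u ≠ v → u ≠ j → C'.b u = C.b u ∧ C'.w u = C.w u)

/-- A pebbling of cost at most `p`, with moves given by `move`, all configurations
satisfying the extra constraint `Extra`, starting and ending with the empty
configuration and achieving `Goal` (a property of the whole sequence together with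
its length). -/
def PebblingLE {V : Type} [Fintype V] (move : FConfig V → FConfig V → Prop)
    (Extra : FConfig V → Prop) (Goal : (ℕ → FConfig V) → ℕ → Prop) (p : ℝ) : Prop :=
  ∃ (n : ℕ) (C : ℕ → FConfig V),
    C 0 = FConfig.zero V ∧ C n = FConfig.zero V ∧
    (∀ t ≤ n, (C t).Valid) ∧
    (∀ t ≤ n, Extra (C t)) ∧
    (∀ t < n, move (C t) (C (t + 1))) ∧
    Goal C n ∧
    (∀ t ≤ n, (C t).weight ≤ p)

/-! ## The complete `d`-ary tree of height `h` (with `h` levels) -/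

/-- Nodes of the complete `d`-ary tree with `h` levels: a level `l < h`
together with an index among the `d ^ l` nodes of that level. -/
abbrev TNode (d h : ℕ) := Σ l : Fin h, Fin (d ^ (l : ℕ))

/-- `c` is a child of `v` in the complete `d`-ary tree. -/
def IsChild (d h : ℕ) (c v : TNode d h) : Prop :=
  (c.1 : ℕ) = (v.1 : ℕ) + 1 ∧ ∃ j : Fin d, (c.2 : ℕ) = d * (v.2 : ℕ) + (j : ℕ)

/-- The root of the tree. -/
def troot (d h : ℕ) (hh : 0 < h) : TNode d h :=
  ⟨⟨0, hh⟩, ⟨0, by simp⟩⟩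

/-- The tree `T_d^h` has a black pebbling of cost at most `p`. -/
def BlackPebbles (d h : ℕ) (hh : 0 < h) (p : ℝ) : Prop :=
  PebblingLE (FMove (IsChild d h)) FConfig.BlackOnly
    (fun C n => ∃ t ≤ n, (C t).b (troot d h hh) = 1) p

/-- The tree `T_d^h` has a whole black-white pebbling (no white sliding)
of cost at most `p`. -/
def BWPebbles (d h : ℕ) (hh : 0 < h) (p : ℝ) : Prop :=
  PebblingLE (FMove (IsChild d h)) FConfig.Whole
    (fun C n => ∃ t ≤ n, (C t).b (troot d h hh) = 1) p

/-- The tree `T_d^h` has a fractional pebbling of cost at most `p`. -/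
def FRPebbles (d h : ℕ) (hh : 0 < h) (p : ℝ) : Prop :=
  PebblingLE (FMove (IsChild d h)) (fun _ => True)
    (fun C n => ∃ t ≤ n, (C t).b (troot d h hh) = 1) p

/-- Fractional pebbling of `T_d^h` where white sliding moves are also permitted. -/
def FRPebblesWS (d h : ℕ) (hh : 0 < h) (p : ℝ) : Prop :=
  PebblingLE (fun C C' => FMove (IsChild d h) C C' ∨ WhiteSlide (IsChild d h) C C')
    (fun _ => True)
    (fun C n => ∃ t ≤ n, (C t).b (troot d h hh) = 1) p

/-! ## Tree evaluation problems -/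

/-- The `k`-valued input variables of the tree evaluation problem on the complete
`d`-ary tree with `h` levels: the single variable of a height-1 tree is its leaf
value; for a tree of height `h+2`, a variable is either an entry `f_root(args)`
of the root function's table, or a variable of one of the `d` principal subtrees. -/
inductive TEVar (d k : ℕ) : ℕ → Type where
  | leaf : TEVar d k 1
  | root {h : ℕ} (args : Fin d → Fin k) : TEVar d k (h + 2)
  | child {h : ℕ} (j : Fin d) (x : TEVar d k (h + 1)) : TEVar d k (h + 2)

/-- The value of the root of the tree, computed bottom-up from an assignment of
values to all input variables. (For the degenerate height 0 it returns a junk value.) -/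
def rootValue (d k : ℕ) (hk : 0 < k) : (h : ℕ) → (TEVar d k h → Fin k) → Fin k
  | 0, _ => ⟨0, hk⟩
  | 1, I => I .leaf
  | (h + 2), I => I (.root fun j => rootValue d k hk (h + 1) fun x => I (.child j x))

/-- The Boolean tree evaluation problem `BT_d^h(k)`: does the root have value 1
(represented by `(0 : Fin k)`)? -/
def BTfun (d k : ℕ) (hk : 0 < k) (h : ℕ) (I : TEVar d k h → Fin k) : Bool :=
  decide (rootValue d k hk h I = ⟨0, hk⟩)

/-- `ThriftyVar d k hk h I v` holds iff querying variable `v` on input `I` is a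
thrifty query: if `v` is an entry `f_i(args)` of the function table of an internal
node `i`, then `args` must be the tuple of correct values of the children of `i`. -/
def ThriftyVar (d k : ℕ) (hk : 0 < k) : (h : ℕ) → (TEVar d k h → Fin k) → TEVar d k h → Prop
  | 0, _, _ => True
  | 1, _, _ => True
  | (h + 2), I, .root args =>
      args = fun j => rootValue d k hk (h + 1) fun x => I (.child j x)
  | (h + 2), I, .child j x =>
      ThriftyVar d k hk (h + 1) (fun y => I (.child j y)) x

/-! ## k-way branching programs -/

/-- A deterministic `k`-way branching program with input variables `V` (each taking
values in `[k] = Fin k`) and outputs in `R`. Each state is either a non-final state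
labelled with the variable it queries (`Sum.inl v`), with `k` outedges given by
`next`, or a final state labelled with an output (`Sum.inr r`). -/
structure DBP (V : Type) (k : ℕ) (R : Type) where
  Q : Type
  fin : Fintype Q
  start : Q
  label : Q → V ⊕ R
  next : Q → Fin k → Q

namespace DBP

variable {V : Type} {k : ℕ} {R : Type}

/-- The size of a branching program is its number of states. -/
def size (B : DBP V k R) : ℕ := @Fintype.card B.Q B.fin

/-- One deterministic step on input `I` (final states are absorbing). -/
def step (B : DBP V k R) (I : V → Fin k) (q : B.Q) : B.Q :=
  match B.label q with
  | .inl v => B.next q (I v)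
  | .inr _ => q

/-- `B` computes the total function `f`: on every input, the computation reaches the
final state labelled with the correct output. -/
def Computes (B : DBP V k R) (f : (V → Fin k) → R) : Prop :=
  ∀ I : V → Fin k, ∃ t : ℕ, B.label ((B.step I)^[t] B.start) = .inr (f I)

end DBP

/-- A nondeterministic `k`-way branching program: as in `DBP`, but a non-final state
may have any number of outedges with any labels in `Fin k`, given by the edge
relation `edge q a q'`. -/
structure NBP (V : Type) (k : ℕ) (R : Type) where
  Q : Type
  fin : Fintype Q
  start : Q
  label : Q → V ⊕ R
  edge : Q → Fin k → Q → Prop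

namespace NBP

variable {V : Type} {k : ℕ} {R : Type}

/-- The size of a branching program is its number of states. -/
def size (B : NBP V k R) : ℕ := @Fintype.card B.Q B.fin

/-- One nondeterministic step on input `I`: follow an edge out of a non-final state
whose label matches the value of the queried variable. -/
def Step (B : NBP V k R) (I : V → Fin k) (q q' : B.Q) : Prop :=
  ∃ v, B.label q = .inl v ∧ B.edge q (I v) q'

/-- Some computation of `B` on input `I` ends in a final state labelled `r`. -/
def Outputs (B : NBP V k R) (I : V → Fin k) (r : R) : Prop :=
  ∃ q, Relation.ReflTransGen (B.Step I) B.start q ∧ B.label q = .inr r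

/-- `B` computes the total function `f`: on every input some computation ends in a
final state, and every computation ending in a final state ends in the one labelled
with the correct output. -/
def Computes (B : NBP V k R) (f : (V → Fin k) → R) : Prop :=
  ∀ (I : V → Fin k) (r : R), B.Outputs I r ↔ r = f I

end NBP

/-- A deterministic branching program for a tree evaluation problem is thrifty if on
every input, every query made during the computation is a thrifty query. -/
def DBPThrifty {R : Type} (d k h : ℕ) (hk : 0 < k) (B : DBP (TEVar d k h) k R) : Prop :=
  ∀ (I : TEVar d k h → Fin k) (t : ℕ) (v : TEVar d k h),
    B.label ((B.step I)^[t] B.start) = .inl v → ThriftyVar d k hk h I v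

/-- A nondeterministic branching program for a tree evaluation problem is thrifty if
for every input, every computation ending in a final state makes only thrifty
queries. -/
def NBPThrifty {R : Type} (d k h : ℕ) (hk : 0 < k) (B : NBP (TEVar d k h) k R) : Prop :=
  ∀ (I : TEVar d k h → Fin k) (n : ℕ) (path : ℕ → B.Q),
    path 0 = B.start →
    (∀ t < n, B.Step I (path t) (path (t + 1))) →
    (∃ r, B.label (path n) = .inr r) →
    ∀ t < n, ∀ v, B.label (path t) = .inl v → ThriftyVar d k hk h I v


/-! A branching program can simulate a black pebbling of `T_d^h` move by move. At time `t` it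
remembers the values of the nodes carrying a black pebble, so it needs at most `k ^ p` states
per time step. A pebble is placed on a node only when all its children carry pebbles, so at
that moment the program knows the correct values of the children; it queries the node's
function at exactly these arguments (a thrifty query) and remembers the answer. -/

namespace DBP

variable {V : Type} {k : ℕ} {R : Type}

theorem iterate_step_of_label_eq_inr (B : DBP V k R) (I : V → Fin k) {q : B.Q} {r : R}
    (hq : B.label q = .inr r) (s : ℕ) : (B.step I)^[s] q = q :=
  Function.iterate_fixed (by rw [step, hq]) s

def layered (n : ℕ) (M : ℕ → Type) [∀ t, Fintype (M t)] (init : M 0)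
    (label : ∀ t, M t → V ⊕ R) (update : ∀ t, M t → Fin k → M (t + 1)) : DBP V k R where
  Q := Σ t : Fin (n + 1), M t
  fin := inferInstance
  start := ⟨⟨0, n.succ_pos⟩, init⟩
  label q := label q.1 q.2
  next q a := if h : (q.1 : ℕ) < n then ⟨⟨q.1 + 1, by omega⟩, update q.1 q.2 a⟩ else q

section Layered

variable {n : ℕ} {M : ℕ → Type} [∀ t, Fintype (M t)] {init : M 0}
  {label : ∀ t, M t → V ⊕ R} {update : ∀ t, M t → Fin k → M (t + 1)}

theorem size_layered :
    (layered n M init label update).size = ∑ t : Fin (n + 1), Fintype.card (M t) :=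
  Fintype.card_sigma

theorem iterate_step_layered {I : V → Fin k} {t₀ : ℕ} (ht₀ : t₀ ≤ n) {mem : ∀ t, M t}
    (h0 : mem 0 = init)
    (hrun : ∀ t < t₀, ∃ v, label t (mem t) = .inl v ∧ update t (mem t) (I v) = mem (t + 1))
    (t : ℕ) (ht : t ≤ t₀) :
    ((layered n M init label update).step I)^[t] (layered n M init label update).start =
      ⟨⟨t, by omega⟩, mem t⟩ := by
  induction t with
  | zero => rw [← h0]; rfl
  | succ t ih =>
    obtain ⟨v, hv, hupd⟩ := hrun t (by omega)
    rw [Function.iterate_succ_apply', ih (by omega)]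
    simp only [step, layered, hv, dif_pos (show t < n by omega), hupd]

theorem computes_layered {f : (V → Fin k) → R} {P : (V → Fin k) → V → Prop}
    (hrun : ∀ I, ∃ t₀ ≤ n, ∃ mem : ∀ t, M t, mem 0 = init ∧
      (∀ t < t₀, ∃ v, label t (mem t) = .inl v ∧ P I v ∧
        update t (mem t) (I v) = mem (t + 1)) ∧
      label t₀ (mem t₀) = .inr (f I)) :
    (layered n M init label update).Computes f ∧
      ∀ I t v, (layered n M init label update).label
        (((layered n M init label update).step I)^[t] (layered n M init label update).start) =
          .inl v → P I v := by
  refine ⟨fun I => ?_, fun I t v hv => ?_⟩ <;>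
  obtain ⟨t₀, ht₀, mem, h0, hsteps, hout⟩ := hrun I <;>
  have hiter := iterate_step_layered (label := label) (update := update) ht₀ h0
    fun t ht => (hsteps t ht).imp fun _ hv => ⟨hv.1, hv.2.2⟩
  · exact ⟨t₀, by rw [hiter t₀ le_rfl]; exact hout⟩
  · rcases lt_or_ge t t₀ with ht | ht
    · obtain ⟨v', hv', hP, -⟩ := hsteps t ht
      rw [hiter t ht.le] at hv
      obtain rfl : v' = v := Sum.inl.inj (hv'.symm.trans hv)
      exact hP
    · obtain ⟨s, rfl⟩ := Nat.exists_eq_add_of_le' ht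
      rw [Function.iterate_add_apply, hiter t₀ le_rfl,
        (layered n M init label update).iterate_step_of_label_eq_inr I
          (q := ⟨⟨t₀, by omega⟩, mem t₀⟩) hout] at hv
      exact absurd (hout.symm.trans hv) Sum.inr_ne_inl

end Layered

end DBP

section TreeAddresses

variable {d k : ℕ}

/- A node is addressed by its path of child indices from the root. A path of length `≥ m`
addresses the leaf reached by its first `m` steps. -/

def nodeVar : (m : ℕ) → List (Fin d) → (Fin d → Fin k) → TEVar d k (m + 1)
  | 0, _, _ => .leaf
  | _ + 1, [], args => .root args
  | m + 1, j :: p, args => .child j (nodeVar m p args)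

def nodeValue (hk : 0 < k) : (m : ℕ) → (TEVar d k (m + 1) → Fin k) → List (Fin d) → Fin k
  | m, I, [] => rootValue d k hk (m + 1) I
  | 0, I, _ :: _ => I .leaf
  | m + 1, I, j :: p => nodeValue hk m (fun x => I (.child j x)) p

theorem nodeValue_nil (hk : 0 < k) :
    ∀ (m : ℕ) (I : TEVar d k (m + 1) → Fin k),
      nodeValue hk m I [] = rootValue d k hk (m + 1) I
  | 0, _ | _ + 1, _ => rfl

theorem apply_nodeVar_childValues (hk : 0 < k) :
    ∀ (m : ℕ) (I : TEVar d k (m + 1) → Fin k) (p : List (Fin d)),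
      I (nodeVar m p fun j => nodeValue hk m I (p ++ [j])) = nodeValue hk m I p
  | 0, _, [] | 0, _, _ :: _ => rfl
  | m + 1, I, [] => congrArg (fun args => I (.root args)) (funext fun _ => nodeValue_nil hk m _)
  | m + 1, I, j :: p => apply_nodeVar_childValues hk m (fun x => I (.child j x)) p

theorem thriftyVar_nodeVar_childValues (hk : 0 < k) :
    ∀ (m : ℕ) (I : TEVar d k (m + 1) → Fin k) (p : List (Fin d)),
      ThriftyVar d k hk (m + 1) I (nodeVar m p fun j => nodeValue hk m I (p ++ [j]))
  | 0, _, _ => trivial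
  | m + 1, _, [] => funext fun _ => nodeValue_nil hk m _
  | m + 1, I, j :: p => thriftyVar_nodeVar_childValues hk m (fun x => I (.child j x)) p

theorem nodeVar_eq_of_length_le (args args' : Fin d → Fin k) :
    ∀ (m : ℕ) (p : List (Fin d)), m ≤ p.length →
      (nodeVar m p args : TEVar d k (m + 1)) = nodeVar m p args'
  | 0, _, _ => rfl
  | m + 1, j :: p, h =>
    congrArg (TEVar.child j) (nodeVar_eq_of_length_le args args' m p (by simpa using h))

theorem nodeVar_eq_childValues (hk : 0 < k) {m : ℕ} {I : TEVar d k (m + 1) → Fin k}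
    {p : List (Fin d)} {args : Fin d → Fin k}
    (hargs : p.length < m → ∀ j, args j = nodeValue hk m I (p ++ [j])) :
    nodeVar m p args = nodeVar m p fun j => nodeValue hk m I (p ++ [j]) := by
  by_cases hp : p.length < m
  · rw [funext (hargs hp)]
  · exact nodeVar_eq_of_length_le _ _ m p (by omega)

/- The `i`-th node of level `l` is reached from the root along the `l` base-`d` digits of `i`,
most significant first. -/

def digitPath (hd : 0 < d) : ℕ → ℕ → List (Fin d)
  | 0, _ => []
  | l + 1, i => digitPath hd l (i / d) ++ [⟨i % d, Nat.mod_lt i hd⟩]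

def nodePath (hd : 0 < d) {h : ℕ} (v : TNode d h) : List (Fin d) :=
  digitPath hd v.1 v.2

theorem length_digitPath (hd : 0 < d) : ∀ l i, (digitPath hd l i).length = l
  | 0, _ => rfl
  | l + 1, i => by simp [digitPath, length_digitPath hd l]

theorem digitPath_mul_add (hd : 0 < d) (l i : ℕ) (j : Fin d) :
    digitPath hd (l + 1) (d * i + j) = digitPath hd l i ++ [j] := by
  have hdiv : (d * i + j) / d = i := by
    rw [Nat.mul_add_div hd, Nat.div_eq_of_lt j.2, add_zero]
  have hmod : (d * i + j) % d = j := by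
    rw [Nat.mul_add_mod, Nat.mod_eq_of_lt j.2]
  simp only [digitPath, hdiv, hmod]

theorem exists_isChild_nodePath (hd : 0 < d) {h : ℕ} (v : TNode d h) (hv : (v.1 : ℕ) + 1 < h)
    (j : Fin d) : ∃ c, IsChild d h c v ∧ nodePath hd c = nodePath hd v ++ [j] := by
  have hlt : d * v.2 + j < d ^ ((v.1 : ℕ) + 1) := calc
    d * v.2 + j < d * (v.2 + 1) := by rw [mul_add, mul_one]; exact Nat.add_lt_add_left j.2 _
    _ ≤ d * d ^ (v.1 : ℕ) := Nat.mul_le_mul_left d v.2.2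
    _ = d ^ ((v.1 : ℕ) + 1) := (pow_succ' d _).symm
  exact ⟨⟨⟨v.1 + 1, hv⟩, ⟨d * v.2 + j, hlt⟩⟩, ⟨rfl, j, rfl⟩,
    digitPath_mul_add hd v.1 v.2 j⟩

end TreeAddresses

section Pebbling

variable {V : Type} {child : V → V → Prop} {C C' : FConfig V}

/-- Only a move of the third kind raises a black value. -/
theorem FMove.eq_of_b_lt (hm : FMove child C C') {v : V} (hv : C.b v < C'.b v) :
    (∀ c, child c v → C.b c + C.w c = 1) ∧ ∀ u, C.b u < C'.b u → u = v := by
  rcases hm with ⟨x, hx, -, hrest⟩ | ⟨x, hx, -, hrest⟩ | ⟨x, hfull, -, -, hchild, hrest⟩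
  · obtain rfl | hne := eq_or_ne v x
    · exact absurd hx hv.not_ge
    · exact absurd (hrest v hne).1 hv.ne'
  · obtain rfl | hne := eq_or_ne v x
    · exact absurd hx hv.ne'
    · exact absurd (hrest v hne).1 hv.ne'
  · have hx : ∀ u, C.b u < C'.b u → u = x := fun u hu => by
      by_contra hne
      by_cases hc : child u x
      · exact (hchild u hc).1.not_gt hu
      · exact (hrest u hne hc).1.le.not_gt hu
    obtain rfl := hx v hv
    exact ⟨hfull, hx⟩

theorem FConfig.BlackOnly.b_eq_zero_of_ne_one (hC : C.BlackOnly) {v : V} (hv : C.b v ≠ 1) :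
    C.b v = 0 :=
  (hC.1 v).1.resolve_right hv

theorem FConfig.BlackOnly.b_eq_one_of_full (hC : C.BlackOnly) {v : V} (hv : C.b v + C.w v = 1) :
    C.b v = 1 := by
  rwa [hC.2 v, add_zero] at hv

theorem FConfig.BlackOnly.weight_eq_card [Fintype V] (hC : C.BlackOnly) :
    C.weight = Fintype.card {v // C.b v = 1} := by
  rw [Fintype.card_subtype, FConfig.weight, ← Finset.sum_boole]
  refine Finset.sum_congr rfl fun v _ => ?_
  rw [hC.2 v, add_zero]
  rcases (hC.1 v).1 with h | h <;> simp [h]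

end Pebbling

section PebblingProgram

variable {d k m : ℕ} (hd : 0 < d) (hk : 0 < k) (C : ℕ → FConfig (TNode d (m + 1)))

/-- When no pebble is placed, any leaf gives a thrifty dummy query. -/
noncomputable def placedNode (t : ℕ) : TNode d (m + 1) :=
  if h : ∃ v, (C t).b v < (C (t + 1)).b v then h.choose
  else ⟨⟨m, m.lt_succ_self⟩, ⟨0, pow_pos hd m⟩⟩

noncomputable def pebbleQuery (t : ℕ) (σ : {v // (C t).b v = 1} → Fin k) : TEVar d k (m + 1) :=
  nodeVar m (nodePath hd (placedNode hd C t)) fun j =>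
    if h : ∃ c : {c // (C t).b c = 1}, nodePath hd c.1 = nodePath hd (placedNode hd C t) ++ [j]
    then σ h.choose else ⟨0, hk⟩

noncomputable def pebblingProgram (n : ℕ) {R : Type} (out : Fin k → R) :
    DBP (TEVar d k (m + 1)) k R :=
  DBP.layered n (fun t => {v // (C t).b v = 1} → Fin k) (fun _ => ⟨0, hk⟩)
    (fun t σ => if h : (C t).b (troot d (m + 1) m.succ_pos) = 1 then .inr (out (σ ⟨_, h⟩))
      else .inl (pebbleQuery hd hk C t σ))
    (fun t σ a v => if h : (C t).b v.1 = 1 then σ ⟨v.1, h⟩ else a)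

def trueMemory (I : TEVar d k (m + 1) → Fin k) (t : ℕ) : {v // (C t).b v = 1} → Fin k :=
  fun v => nodeValue hk m I (nodePath hd v.1)

variable {hd C} {t : ℕ}

theorem b_eq_one_of_isChild_placedNode (hb : (C t).BlackOnly)
    (hmove : FMove (IsChild d (m + 1)) (C t) (C (t + 1))) {c : TNode d (m + 1)}
    (hc : IsChild d (m + 1) c (placedNode hd C t)) : (C t).b c = 1 := by
  unfold placedNode at hc
  split_ifs at hc with h
  · exact hb.b_eq_one_of_full ((hmove.eq_of_b_lt h.choose_spec).1 c hc)
  · exact absurd hc.1 (by have := c.1.2; simp only; omega)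

theorem pebbleQuery_trueMemory (hb : (C t).BlackOnly)
    (hmove : FMove (IsChild d (m + 1)) (C t) (C (t + 1))) (I : TEVar d k (m + 1) → Fin k) :
    pebbleQuery hd hk C t (trueMemory hd hk C I t) =
      nodeVar m (nodePath hd (placedNode hd C t))
        fun j => nodeValue hk m I (nodePath hd (placedNode hd C t) ++ [j]) := by
  refine nodeVar_eq_childValues hk fun hlt j => ?_
  rw [nodePath, length_digitPath] at hlt
  obtain ⟨c, hc, hpath⟩ := exists_isChild_nodePath hd (placedNode hd C t) (by omega) j
  have h : ∃ c : {c // (C t).b c = 1}, nodePath hd c.1 = nodePath hd (placedNode hd C t) ++ [j] :=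
    ⟨⟨c, b_eq_one_of_isChild_placedNode hb hmove hc⟩, hpath⟩
  rw [dif_pos h]
  exact congrArg (nodeValue hk m I) h.choose_spec

/-- The only node pebbled anew is `placedNode`, whose value is the answer to the query. -/
theorem update_trueMemory (hb : (C t).BlackOnly)
    (hmove : FMove (IsChild d (m + 1)) (C t) (C (t + 1))) (I : TEVar d k (m + 1) → Fin k) :
    (fun v : {v // (C (t + 1)).b v = 1} =>
      if h : (C t).b v.1 = 1 then trueMemory hd hk C I t ⟨v.1, h⟩
      else I (pebbleQuery hd hk C t (trueMemory hd hk C I t))) = trueMemory hd hk C I (t + 1) := by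
  funext v
  split_ifs with h
  · rfl
  have hlt : (C t).b v.1 < (C (t + 1)).b v.1 := by
    rw [v.2, hb.b_eq_zero_of_ne_one h]; exact one_pos
  have hv : v.1 = placedNode hd C t := by
    have hplaced : ∃ u, (C t).b u < (C (t + 1)).b u := ⟨v.1, hlt⟩
    rw [placedNode, dif_pos hplaced]
    exact (hmove.eq_of_b_lt hplaced.choose_spec).2 _ hlt
  rw [pebbleQuery_trueMemory hk hb hmove, apply_nodeVar_childValues hk m I, trueMemory, hv]

theorem pebblingProgram_computes_thrifty {n : ℕ} {R : Type} (out : Fin k → R)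
    (h0 : C 0 = FConfig.zero _)
    (hblack : ∀ t ≤ n, (C t).BlackOnly)
    (hmove : ∀ t < n, FMove (IsChild d (m + 1)) (C t) (C (t + 1)))
    (hgoal : ∃ t ≤ n, (C t).b (troot d (m + 1) m.succ_pos) = 1) :
    (pebblingProgram hd hk C n out).Computes (fun I => out (rootValue d k hk (m + 1) I)) ∧
      DBPThrifty d k (m + 1) hk (pebblingProgram hd hk C n out) := by
  refine DBP.computes_layered fun I =>
    ⟨Nat.find hgoal, (Nat.find_spec hgoal).1, trueMemory hd hk C I, ?_, fun t ht => ?_, ?_⟩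
  · funext v
    exact absurd ((congrFun (congrArg FConfig.b h0) v.1).symm.trans v.2) zero_ne_one
  · have htn : t < n := ht.trans_le (Nat.find_spec hgoal).1
    have hroot : ¬ (C t).b (troot d (m + 1) m.succ_pos) = 1 :=
      fun h => Nat.find_min hgoal ht ⟨htn.le, h⟩
    refine ⟨_, dif_neg hroot, ?_, update_trueMemory hk (hblack t htn.le) (hmove t htn) I⟩
    rw [pebbleQuery_trueMemory hk (hblack t htn.le) (hmove t htn)]
    exact thriftyVar_nodeVar_childValues hk m I _
  · rw [dif_pos (Nat.find_spec hgoal).2]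
    exact congrArg (Sum.inr ∘ out) (nodeValue_nil hk m I)

theorem pebblingProgram_size_le {n p : ℕ} {R : Type} (out : Fin k → R)
    (hblack : ∀ t ≤ n, (C t).BlackOnly) (hwt : ∀ t ≤ n, (C t).weight ≤ p) :
    (pebblingProgram hd hk C n out).size ≤ (n + 1) * k ^ p := by
  have hcard (t : Fin (n + 1)) : Fintype.card {v // (C t).b v = 1} ≤ p := by
    have := (hblack t t.is_le).weight_eq_card ▸ hwt t t.is_le
    exact_mod_cast this
  rw [pebblingProgram, DBP.size_layered]
  calc ∑ t : Fin (n + 1), Fintype.card ({v // (C t).b v = 1} → Fin k)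
      = ∑ t : Fin (n + 1), k ^ Fintype.card {v // (C t).b v = 1} := by
        simp only [Fintype.card_fun, Fintype.card_fin]
    _ ≤ ∑ _t : Fin (n + 1), k ^ p :=
        Finset.sum_le_sum fun t _ => Nat.pow_le_pow_right hk (hcard t)
    _ = (n + 1) * k ^ p := by simp

end PebblingProgram

theorem blackPebbling_to_thrifty_DBP (d h p : ℕ) (hd : 2 ≤ d) (hh : 2 ≤ h)
    (hpeb : BlackPebbles d h (by omega) (p : ℝ)) :
    ∃ c : ℕ, ∀ k : ℕ, ∀ hk2 : 2 ≤ k,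
      (∃ B : DBP (TEVar d k h) k (Fin k),
        B.Computes (rootValue d k (by omega) h) ∧
        DBPThrifty d k h (by omega) B ∧ B.size ≤ c * k ^ p) ∧
      (∃ B' : DBP (TEVar d k h) k Bool,
        B'.Computes (BTfun d k (by omega) h) ∧
        DBPThrifty d k h (by omega) B' ∧ B'.size ≤ c * k ^ p) := by
  obtain ⟨m, rfl⟩ : ∃ m, h = m + 1 := ⟨h - 1, by omega⟩
  obtain ⟨n, C, h0, -, -, hblack, hmove, hgoal, hwt⟩ := hpeb
  have hd0 : 0 < d := by omega
  refine ⟨n + 1, fun k hk2 => ?_⟩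
  have hk : 0 < k := by omega
  have program {R : Type} (out : Fin k → R) : ∃ B : DBP (TEVar d k (m + 1)) k R,
      B.Computes (fun I => out (rootValue d k hk (m + 1) I)) ∧
      DBPThrifty d k (m + 1) hk B ∧ B.size ≤ (n + 1) * k ^ p := by
    obtain ⟨hcomputes, hthrifty⟩ :=
      pebblingProgram_computes_thrifty (hd := hd0) hk out h0 hblack hmove hgoal
    exact ⟨_, hcomputes, hthrifty, pebblingProgram_size_le hk out hblack hwt⟩
  exact ⟨program id, program fun a => decide (a = ⟨0, hk⟩)⟩
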